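/- Let X be a Banach space that is 1-complemented in a dual Banach space, i.e., X embeds isometrically into a dual Banach space Y with a norm-one linear projection P : Y → X. Then for every non-principal ultrafilter ω on ℕ, X is 1-complemented in its ultra-completion X_ω: there exists a 1-Lipschitz retraction of X_ω onto X. -/

import Mathlib

/-!
By Banach–Alaoglu, bounded sets of the dual `F*` are weak-* relatively compact, so for a bounded
sequence `x` the sequence `ι xₙ` has a weak-* limit `ℓ_x` along `ω`; put `r x := P ℓ_x`.
Norm-closed balls of `F*` are weak-* closed, hence `‖ℓ_x - ℓ_y‖ ≤ lim_ω ‖xₙ - yₙ‖ = d_ω(x, y)`,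
and `‖P‖ ≤ 1` makes `r` 1-Lipschitz. For a constant sequence `ℓ = ι p`, and `P (ι p) = p`.
-/

open Filter Topology Bornology StrongDual

def IsBddSeq {X : Type*} [MetricSpace X] (x : ℕ → X) : Prop :=
  ∃ C : ℝ, ∀ n, dist (x n) (x 0) ≤ C

noncomputable def uLim (ω : Ultrafilter ℕ) (a : ℕ → ℝ) : ℝ :=
  limUnder (↑ω : Filter ℕ) a

noncomputable def dOm {X : Type*} [MetricSpace X] (ω : Ultrafilter ℕ) (x y : ℕ → X) : ℝ :=
  uLim ω (fun n => dist (x n) (y n))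

theorem IsCompact.exists_tendsto_ultrafilter {X α : Type*} [TopologicalSpace X] {K : Set X}
    (hK : IsCompact K) (ω : Ultrafilter α) {a : α → X} (ha : ∀ i, a i ∈ K) :
    ∃ x, Tendsto a ω (𝓝 x) := by
  obtain ⟨x, -, hx⟩ := hK.ultrafilter_le_nhds' (ω.map a) (univ_mem' (s := a ⁻¹' K) ha)
  exact ⟨x, hx⟩

theorem IsBddSeq.isBounded_range {X : Type*} [MetricSpace X] {x : ℕ → X} (hx : IsBddSeq x) :
    IsBounded (Set.range x) := by
  obtain ⟨C, hC⟩ := hx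
  exact (Metric.isBounded_iff_subset_closedBall (x 0)).2 ⟨C, by rintro _ ⟨n, rfl⟩; exact hC n⟩

theorem tendsto_dist_dOm {X : Type*} [MetricSpace X] (ω : Ultrafilter ℕ) {x y : ℕ → X}
    (hx : IsBddSeq x) (hy : IsBddSeq y) :
    Tendsto (fun n => dist (x n) (y n)) (ω : Filter ℕ) (𝓝 (dOm ω x y)) := by
  obtain ⟨C, hC⟩ := Metric.isBounded_iff.1 (hx.isBounded_range.union hy.isBounded_range)
  have hmem : ∀ n, dist (x n) (y n) ∈ Set.Icc 0 C := fun n =>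
    ⟨dist_nonneg, hC (.inl ⟨n, rfl⟩) (.inr ⟨n, rfl⟩)⟩
  exact tendsto_nhds_limUnder (isCompact_Icc.exists_tendsto_ultrafilter ω hmem)

namespace WeakDual

variable {𝕜 E α : Type*} [NontriviallyNormedField 𝕜] [SeminormedAddCommGroup E]
  [NormedSpace 𝕜 E]

noncomputable def weakStarLim (l : Filter α) (a : α → StrongDual 𝕜 E) : StrongDual 𝕜 E :=
  toStrongDual (limUnder l fun i => toWeakDual (a i))

theorem weakStarLim_const (l : Filter α) [l.NeBot] (f : StrongDual 𝕜 E) :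
    weakStarLim l (fun _ => f) = f := by
  simp [weakStarLim, tendsto_const_nhds.limUnder_eq]

theorem tendsto_weakStarLim [ProperSpace 𝕜] (ω : Ultrafilter α) {a : α → StrongDual 𝕜 E}
    (ha : IsBounded (Set.range a)) :
    Tendsto (fun i => toWeakDual (a i)) (ω : Filter α) (𝓝 (toWeakDual (weakStarLim ω a))) := by
  have hK : IsCompact (closure (Set.range fun i => toWeakDual (a i))) :=
    isCompact_of_bounded_of_closed (isBounded_closure ha) isClosed_closure
  exact tendsto_nhds_limUnder (hK.exists_tendsto_ultrafilter ω fun i => subset_closure ⟨i, rfl⟩)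

theorem norm_toStrongDual_le_of_tendsto {l : Filter α} [l.NeBot] {a : α → StrongDual 𝕜 E}
    {ℓ : WeakDual 𝕜 E} {D : ℝ} (ha : Tendsto (fun i => toWeakDual (a i)) l (𝓝 ℓ))
    (hD : Tendsto (fun i => ‖a i‖) l (𝓝 D)) : ‖toStrongDual ℓ‖ ≤ D := by
  refine le_of_forall_gt_imp_ge_of_dense fun r hr => ?_
  have hball : ∀ᶠ i in l, toWeakDual (a i) ∈ toStrongDual ⁻¹' Metric.closedBall 0 r :=
    (hD.eventually (ge_mem_nhds hr)).mono fun i hi => by simpa using hi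
  simpa using (isClosed_closedBall 0 r).mem_of_tendsto ha hball

theorem norm_weakStarLim_sub_le [ProperSpace 𝕜] (ω : Ultrafilter α)
    {a b : α → StrongDual 𝕜 E} (ha : IsBounded (Set.range a)) (hb : IsBounded (Set.range b))
    {D : ℝ} (hD : Tendsto (fun i => ‖a i - b i‖) (ω : Filter α) (𝓝 D)) :
    ‖weakStarLim ω a - weakStarLim ω b‖ ≤ D :=
  norm_toStrongDual_le_of_tendsto
    ((tendsto_weakStarLim ω ha).sub (tendsto_weakStarLim ω hb)) hD

end WeakDual

open WeakDual

theorem stmt_6_general (X : Type*) [NormedAddCommGroup X] [NormedSpace ℝ X]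
    (F : Type*) [NormedAddCommGroup F] [NormedSpace ℝ F]
    (ι : X →ₗᵢ[ℝ] (F →L[ℝ] ℝ)) (P : (F →L[ℝ] ℝ) →L[ℝ] X)
    (hP : ‖P‖ ≤ 1) (hPι : ∀ x : X, P (ι x) = x)
    (ω : Ultrafilter ℕ) :
    ∃ r : (ℕ → X) → X,
      (∀ x y : ℕ → X, IsBddSeq x → IsBddSeq y → dist (r x) (r y) ≤ dOm ω x y) ∧
      (∀ p : X, r (fun _ => p) = p) := by
  refine ⟨fun x => P (weakStarLim ω fun n => ι (x n)), fun x y hx hy => ?_,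
    fun p => by simp only [weakStarLim_const, hPι]⟩
  have hι : ∀ {x : ℕ → X}, IsBddSeq x → IsBounded (Set.range fun n => ι (x n)) := fun hx => by
    rw [← Function.comp_def, Set.range_comp]
    exact ι.isometry.lipschitz.isBounded_image hx.isBounded_range
  have hdist : Tendsto (fun n => ‖ι (x n) - ι (y n)‖) (ω : Filter ℕ) (𝓝 (dOm ω x y)) := by
    simpa only [← map_sub, ι.norm_map, ← dist_eq_norm] using tendsto_dist_dOm ω hx hy
  calc dist (P (weakStarLim ω fun n => ι (x n))) (P (weakStarLim ω fun n => ι (y n)))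
      = ‖P ((weakStarLim ω fun n => ι (x n)) - weakStarLim ω fun n => ι (y n))‖ := by
        rw [map_sub, dist_eq_norm]
    _ ≤ ‖(weakStarLim ω fun n => ι (x n)) - weakStarLim ω fun n => ι (y n)‖ :=
        P.le_of_opNorm_le hP _ |>.trans_eq (one_mul _)
    _ ≤ dOm ω x y := norm_weakStarLim_sub_le ω (hι hx) (hι hy) hdist

/-- If a Banach space `X` is 1-complemented in a dual Banach space—i.e. it embeds
isometrically into the dual `F*` of a Banach space `F` with a norm-one linear projection
`P : F* → X`—then for every non-principal ultrafilter `ω` on ℕ, `X` is 1-complemented in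
its ultra-completion `X_ω`: there is a map from bounded sequences to `X` which is
1-Lipschitz for `d_ω` and is the identity on constant sequences. -/
theorem stmt_6 (X : Type*) [NormedAddCommGroup X] [NormedSpace ℝ X] [CompleteSpace X]
    (F : Type*) [NormedAddCommGroup F] [NormedSpace ℝ F] [CompleteSpace F]
    (ι : X →ₗᵢ[ℝ] (F →L[ℝ] ℝ)) (P : (F →L[ℝ] ℝ) →L[ℝ] X)
    (hP : ‖P‖ ≤ 1) (hPι : ∀ x : X, P (ι x) = x)
    (ω : Ultrafilter ℕ) (hω : (Filter.cofinite : Filter ℕ) ≤ ↑ω) :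
    ∃ r : (ℕ → X) → X,
      (∀ x y : ℕ → X, IsBddSeq x → IsBddSeq y → dist (r x) (r y) ≤ dOm ω x y) ∧
      (∀ p : X, r (fun _ => p) = p) :=
  stmt_6_general X F ι P hP hPι ω
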